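/- arXiv:2004.14941 — 2 statements merged into one kernel-verified Lean document; each statement's English description precedes it below -/
import Mathlib

section
/- In the scalar Gaussian IB with eigenvalue λ ∈ (0,1): for β > 1/(1−λ), the optimal representation satisfies I(X;T_β*) = ½ log((β−1)(1−λ)/λ) and I(T_β*;Y) = I(X;T_β*) − ½ log(β(1−λ)); in particular I(T_β*;Y) = I(X;T_β*) − ½ log(β(1−λ)) is strictly smaller than I(X;T_β*) for β(1−λ) > 1. -/
/-! With signal-to-noise ratio `s = a²σ_X²`, the channel condition on `a²` reads
`s = (β(1-λ) - 1)/λ`, so that `s + 1 = (β-1)(1-λ)/λ` and `sλ + 1 = β(1-λ)`.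
The gap `I(X;T) - I(T;Y)` is `½ log (sλ + 1)`, positive as soon as `β(1-λ) > 1`. -/

lemma sq_mul_sq_eq_div_of_sq_eq {a σ lam c : ℝ} (hσ : σ ≠ 0) (hlam : lam ≠ 0)
    (ha : a ^ 2 = c / (lam * σ ^ 2)) : a ^ 2 * σ ^ 2 = c / lam := by
  rw [ha]
  field_simp

lemma half_log_div_snr_eq_sub {s lam : ℝ} (hs : 0 ≤ s) (hlam : 0 ≤ lam) :
    (1 / 2) * Real.log ((s + 1) / (s * lam + 1))
      = (1 / 2) * Real.log (s + 1) - (1 / 2) * Real.log (s * lam + 1) := by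
  rw [Real.log_div (by positivity) (by positivity)]
  ring

theorem stmt13_general (σX lam β a : ℝ) (hσ : 0 < σX) (hlam : lam ∈ Set.Ioo (0 : ℝ) 1)
    (ha : a ^ 2 = (β * (1 - lam) - 1) / (lam * σX ^ 2)) :
    (1 / 2) * Real.log (a ^ 2 * σX ^ 2 + 1)
        = (1 / 2) * Real.log ((β - 1) * (1 - lam) / lam) ∧
    (1 / 2) * Real.log ((a ^ 2 * σX ^ 2 + 1) / (a ^ 2 * σX ^ 2 * lam + 1))
        = (1 / 2) * Real.log (a ^ 2 * σX ^ 2 + 1) - (1 / 2) * Real.log (β * (1 - lam)) ∧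
    (1 < β * (1 - lam) →
      (1 / 2) * Real.log ((a ^ 2 * σX ^ 2 + 1) / (a ^ 2 * σX ^ 2 * lam + 1))
        < (1 / 2) * Real.log (a ^ 2 * σX ^ 2 + 1)) := by
  obtain ⟨hlam0, -⟩ := hlam
  have hsnr := sq_mul_sq_eq_div_of_sq_eq hσ.ne' hlam0.ne' ha
  have hgap := half_log_div_snr_eq_sub (by positivity : 0 ≤ a ^ 2 * σX ^ 2) hlam0.le
  have hsnr_lam : a ^ 2 * σX ^ 2 * lam + 1 = β * (1 - lam) := by
    rw [hsnr]; field_simp; ring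
  refine ⟨?_, by rw [hgap, hsnr_lam], fun hβ => ?_⟩
  · rw [hsnr]; congr 2; field_simp; ring
  · rw [hgap, hsnr_lam]
    have := Real.log_pos hβ
    linarith

/-- Scalar Gaussian IB with eigenvalue `λ ∈ (0,1)`: for
`β > 1/(1-λ)` and the optimal representation `T_β* = aX + Z` with
`a² = (β(1-λ)-1)/(λσ_X²)`, one has `I(X;T_β*) = ½ log((β-1)(1-λ)/λ)` and
`I(T_β*;Y) = I(X;T_β*) - ½ log(β(1-λ))`; in particular `I(T_β*;Y) < I(X;T_β*)`
when `β(1-λ) > 1`. -/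
theorem stmt13 (σX lam β a : ℝ) (hσ : 0 < σX) (hlam : lam ∈ Set.Ioo (0 : ℝ) 1)
    (hβ : 1 / (1 - lam) < β) (ha : a ^ 2 = (β * (1 - lam) - 1) / (lam * σX ^ 2)) :
    (1 / 2) * Real.log (a ^ 2 * σX ^ 2 + 1)
        = (1 / 2) * Real.log ((β - 1) * (1 - lam) / lam) ∧
    (1 / 2) * Real.log ((a ^ 2 * σX ^ 2 + 1) / (a ^ 2 * σX ^ 2 * lam + 1))
        = (1 / 2) * Real.log (a ^ 2 * σX ^ 2 + 1) - (1 / 2) * Real.log (β * (1 - lam)) ∧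
    (1 < β * (1 - lam) →
      (1 / 2) * Real.log ((a ^ 2 * σX ^ 2 + 1) / (a ^ 2 * σX ^ 2 * lam + 1))
        < (1 / 2) * Real.log (a ^ 2 * σX ^ 2 + 1)) :=
  stmt13_general σX lam β a hσ hlam ha
end

section
/- The Gaussian IB curve function x ↦ F_IB(x) = x − (n/2) log(∏_{i=1}^n (1−λ_i)^{1/n} + e^{2x/n} ∏_{i=1}^n λ_i^{1/n}) (restricted to an interval of x values where the number of active eigenvalues n is constant) is concave and strictly increasing, with derivative tending to values less than 1; moreover at x = 0 (with n=1) the slope is 1 − λ₁. -/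
open scoped BigOperators

/-! With `u = e^{2x/m}`, the derivative of `x - (m/2) log (a + u b)` is `a / (a + u b)`: it lies
in `(0, 1)` for `a, b > 0` and decreases as `u` grows, which gives monotonicity, concavity and
the slope bound at once. For a single eigenvalue `a + b = (1 - λ₁) + λ₁ = 1`, so the slope at `0`
is `a = 1 - λ₁`. -/

open Real

noncomputable def ibCurve (m a b : ℝ) (x : ℝ) : ℝ :=
  x - (m / 2) * log (a + exp (2 * x / m) * b)

section ibCurve

variable {m a b : ℝ}

theorem hasDerivAt_ibCurve (hm : m ≠ 0) {x : ℝ} (hx : a + exp (2 * x / m) * b ≠ 0) :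
    HasDerivAt (ibCurve m a b) (a / (a + exp (2 * x / m) * b)) x := by
  have hinner : HasDerivAt (fun x => a + exp (2 * x / m) * b)
      (exp (2 * x / m) * (2 / m) * b) x := by
    have hlin : HasDerivAt (fun x : ℝ => 2 * x / m) (2 / m) x := by
      simpa using ((hasDerivAt_id x).const_mul 2).div_const m
    exact (hlin.exp.mul_const b).const_add a
  refine ((hasDerivAt_id x).sub ((hinner.log hx).const_mul (m / 2))).congr_deriv ?_
  field_simp
  ring

theorem deriv_ibCurve (hm : m ≠ 0) (ha : 0 < a) (hb : 0 ≤ b) (x : ℝ) :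
    deriv (ibCurve m a b) x = a / (a + exp (2 * x / m) * b) :=
  (hasDerivAt_ibCurve hm (by positivity)).deriv

theorem differentiable_ibCurve (hm : m ≠ 0) (ha : 0 < a) (hb : 0 ≤ b) :
    Differentiable ℝ (ibCurve m a b) :=
  fun _ => (hasDerivAt_ibCurve hm (by positivity)).differentiableAt

theorem deriv_ibCurve_pos (hm : m ≠ 0) (ha : 0 < a) (hb : 0 ≤ b) (x : ℝ) :
    0 < deriv (ibCurve m a b) x := by
  rw [deriv_ibCurve hm ha hb]
  positivity

theorem deriv_ibCurve_lt_one (hm : m ≠ 0) (ha : 0 < a) (hb : 0 < b) (x : ℝ) :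
    deriv (ibCurve m a b) x < 1 := by
  rw [deriv_ibCurve hm ha hb.le, div_lt_one (by positivity)]
  have := mul_pos (exp_pos (2 * x / m)) hb
  linarith

theorem antitone_deriv_ibCurve (hm : 0 < m) (ha : 0 < a) (hb : 0 ≤ b) :
    Antitone (deriv (ibCurve m a b)) := by
  intro x y hxy
  simp only [deriv_ibCurve hm.ne' ha hb]
  have hexp : exp (2 * x / m) ≤ exp (2 * y / m) := exp_le_exp.mpr (by gcongr)
  gcongr

theorem strictMono_ibCurve (hm : m ≠ 0) (ha : 0 < a) (hb : 0 ≤ b) :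
    StrictMono (ibCurve m a b) :=
  strictMono_of_deriv_pos (deriv_ibCurve_pos hm ha hb)

theorem concaveOn_ibCurve (hm : 0 < m) (ha : 0 < a) (hb : 0 ≤ b) :
    ConcaveOn ℝ Set.univ (ibCurve m a b) :=
  (antitone_deriv_ibCurve hm ha hb).concaveOn_univ_of_deriv (differentiable_ibCurve hm.ne' ha hb)

end ibCurve

/-- The Gaussian IB curve function
`F(x) = x - (n/2) log(∏ᵢ(1-λᵢ)^{1/n} + e^{2x/n} ∏ᵢ λᵢ^{1/n})` (for a fixed number `n`
of active eigenvalues `λᵢ ∈ (0,1)`) is strictly increasing and concave, with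
derivative everywhere less than `1`; moreover for `n = 1` the slope at `x = 0` is
`1 - λ₁`. -/
theorem stmt14 (n : ℕ) (hn : 0 < n) (lam : Fin n → ℝ)
    (hl : ∀ i, lam i ∈ Set.Ioo (0 : ℝ) 1) :
    let C1 : ℝ := ∏ i, (1 - lam i) ^ ((1 : ℝ) / n)
    let C2 : ℝ := ∏ i, (lam i) ^ ((1 : ℝ) / n)
    let F : ℝ → ℝ := fun x => x - ((n : ℝ) / 2) * Real.log (C1 + Real.exp (2 * x / n) * C2)
    StrictMono F ∧ ConcaveOn ℝ Set.univ F ∧ (∀ x, deriv F x < 1) ∧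
      (n = 1 → deriv F 0 = 1 - lam ⟨0, hn⟩) := by
  intro C1 C2 F
  have hm : (0 : ℝ) < n := Nat.cast_pos.mpr hn
  have hC1 : 0 < C1 := Finset.prod_pos fun i _ => rpow_pos_of_pos (sub_pos.mpr (hl i).2) _
  have hC2 : 0 < C2 := Finset.prod_pos fun i _ => rpow_pos_of_pos (hl i).1 _
  refine ⟨strictMono_ibCurve hm.ne' hC1 hC2.le, concaveOn_ibCurve hm hC1 hC2.le,
    deriv_ibCurve_lt_one hm.ne' hC1 hC2, ?_⟩
  rintro rfl
  refine (deriv_ibCurve hm.ne' hC1 hC2.le 0).trans ?_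
  simp [C1, C2]
end
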